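/- For smooth functions φ, ψ on (0,∞)×ℝ², there is a universal constant C such that the null form Q₀(φ,ψ) = (∂ₜφ)(∂ₜψ) - ∇ₓφ·∇ₓψ satisfies |Q₀(φ,ψ)(t,x)| ≤ C⟨t+|x|⟩^{-1}([φ]₁|∂ψ| + |∂φ|[ψ]₁) for all t > 0 and x ∈ ℝ², where [φ]₁ = |φ|₁ + ⟨t-|x|⟩|∂φ| and |φ|₁ is the sum of |φ| and the absolute values of the derivatives of φ along L₁, L₂, Ω, ∂ₜ, ∂₁, ∂₂. -/

import Mathlib

noncomputable section

def dT (φ : ℝ → ℝ → ℝ → ℝ) : ℝ → ℝ → ℝ → ℝ := fun t x1 x2 => deriv (fun s => φ s x1 x2) t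
def d1 (φ : ℝ → ℝ → ℝ → ℝ) : ℝ → ℝ → ℝ → ℝ := fun t x1 x2 => deriv (fun s => φ t s x2) x1
def d2 (φ : ℝ → ℝ → ℝ → ℝ) : ℝ → ℝ → ℝ → ℝ := fun t x1 x2 => deriv (fun s => φ t x1 s) x2
def L1 (φ : ℝ → ℝ → ℝ → ℝ) : ℝ → ℝ → ℝ → ℝ := fun t x1 x2 => x1 * dT φ t x1 x2 + t * d1 φ t x1 x2
def L2 (φ : ℝ → ℝ → ℝ → ℝ) : ℝ → ℝ → ℝ → ℝ := fun t x1 x2 => x2 * dT φ t x1 x2 + t * d2 φ t x1 x2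
def Omg (φ : ℝ → ℝ → ℝ → ℝ) : ℝ → ℝ → ℝ → ℝ := fun t x1 x2 => x1 * d2 φ t x1 x2 - x2 * d1 φ t x1 x2
def rr (x1 x2 : ℝ) : ℝ := Real.sqrt (x1 ^ 2 + x2 ^ 2)
def jb (y : ℝ) : ℝ := Real.sqrt (1 + y ^ 2)
def gradNorm (φ : ℝ → ℝ → ℝ → ℝ) (t x1 x2 : ℝ) : ℝ :=
  Real.sqrt (dT φ t x1 x2 ^ 2 + d1 φ t x1 x2 ^ 2 + d2 φ t x1 x2 ^ 2)
def norm1 (φ : ℝ → ℝ → ℝ → ℝ) (t x1 x2 : ℝ) : ℝ :=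
  |φ t x1 x2| + |L1 φ t x1 x2| + |L2 φ t x1 x2| + |Omg φ t x1 x2|
    + |dT φ t x1 x2| + |d1 φ t x1 x2| + |d2 φ t x1 x2|
def bracket1 (φ : ℝ → ℝ → ℝ → ℝ) (t x1 x2 : ℝ) : ℝ :=
  norm1 φ t x1 x2 + jb (t - rr x1 x2) * gradNorm φ t x1 x2
/-- null form Q₀(φ,ψ) = ∂ₜφ∂ₜψ - ∂₁φ∂₁ψ - ∂₂φ∂₂ψ -/
def Q0 (φ ψ : ℝ → ℝ → ℝ → ℝ) (t x1 x2 : ℝ) : ℝ :=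
  dT φ t x1 x2 * dT ψ t x1 x2 - d1 φ t x1 x2 * d1 ψ t x1 x2 - d2 φ t x1 x2 * d2 ψ t x1 x2

/-!
The estimate is pointwise algebra in the first derivatives. Inside the cone (`r ≤ t`), substituting
`t ∂ⱼ = Lⱼ - xⱼ ∂ₜ` gives
`t² Q₀(φ,ψ) = (t² - r²) ∂ₜφ ∂ₜψ + ∂ₜφ Σ xⱼ Lⱼψ - t Σ ∂ⱼψ Lⱼφ` with `|t² - r²| = (t + r)|t - r|`.
Outside (`t ≤ r`), splitting the gradient into radial and angular parts gives
`2 r² Q₀(φ,ψ) = (r∂ₜφ + x·∇φ)(r∂ₜψ - x·∇ψ) + (r∂ₜφ - x·∇φ)(r∂ₜψ + x·∇ψ) - 2 Ωφ Ωψ`,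
and the good derivative is controlled by `[φ]₁` through `r (r∂ₜφ + x·∇φ) = Σ xⱼ Lⱼφ + (r - t) x·∇φ`.
In each product one factor is bounded by `[·]₁` and the other by `(t + r)|∂·|`.
-/

lemma one_le_jb (y : ℝ) : 1 ≤ jb y :=
  Real.one_le_sqrt.mpr (by nlinarith [sq_nonneg y])

lemma abs_le_jb (y : ℝ) : |y| ≤ jb y :=
  Real.abs_le_sqrt (by linarith)

lemma jb_le_one_add_abs (y : ℝ) : jb y ≤ 1 + |y| :=
  (Real.sqrt_le_left (by positivity)).mpr (by nlinarith [abs_nonneg y, sq_abs y])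

lemma rr_nonneg (x1 x2 : ℝ) : 0 ≤ rr x1 x2 := Real.sqrt_nonneg _

lemma rr_sq (x1 x2 : ℝ) : rr x1 x2 ^ 2 = x1 ^ 2 + x2 ^ 2 := Real.sq_sqrt (by positivity)

lemma abs_left_le_rr (x1 x2 : ℝ) : |x1| ≤ rr x1 x2 :=
  Real.abs_le_sqrt (by nlinarith [sq_nonneg x2])

lemma abs_right_le_rr (x1 x2 : ℝ) : |x2| ≤ rr x1 x2 :=
  Real.abs_le_sqrt (by nlinarith [sq_nonneg x1])

lemma abs_mul_add_mul_le {u1 u2 c : ℝ} (v1 v2 : ℝ) (h1 : |u1| ≤ c) (h2 : |u2| ≤ c) :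
    |u1 * v1 + u2 * v2| ≤ c * (|v1| + |v2|) := by
  have hc : 0 ≤ c := (abs_nonneg _).trans h1
  calc |u1 * v1 + u2 * v2| ≤ |u1| * |v1| + |u2| * |v2| := by
        simpa only [abs_mul] using abs_add_le (u1 * v1) (u2 * v2)
    _ ≤ c * (|v1| + |v2|) := by
        rw [mul_add]
        gcongr

section Pointwise

variable (φ ψ : ℝ → ℝ → ℝ → ℝ) (t x1 x2 : ℝ)

lemma gradNorm_nonneg : 0 ≤ gradNorm φ t x1 x2 := Real.sqrt_nonneg _

lemma gradNorm_sq :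
    gradNorm φ t x1 x2 ^ 2 = dT φ t x1 x2 ^ 2 + d1 φ t x1 x2 ^ 2 + d2 φ t x1 x2 ^ 2 :=
  Real.sq_sqrt (by positivity)

lemma abs_dT_le_gradNorm : |dT φ t x1 x2| ≤ gradNorm φ t x1 x2 :=
  Real.abs_le_sqrt (by nlinarith [sq_nonneg (d1 φ t x1 x2), sq_nonneg (d2 φ t x1 x2)])

lemma abs_d1_le_gradNorm : |d1 φ t x1 x2| ≤ gradNorm φ t x1 x2 :=
  Real.abs_le_sqrt (by nlinarith [sq_nonneg (dT φ t x1 x2), sq_nonneg (d2 φ t x1 x2)])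

lemma abs_d2_le_gradNorm : |d2 φ t x1 x2| ≤ gradNorm φ t x1 x2 :=
  Real.abs_le_sqrt (by nlinarith [sq_nonneg (dT φ t x1 x2), sq_nonneg (d1 φ t x1 x2)])

lemma abs_Q0_le_gradNorm_mul : |Q0 φ ψ t x1 x2| ≤ gradNorm φ t x1 x2 * gradNorm ψ t x1 x2 := by
  refine abs_le_of_sq_le_sq ?_ (mul_nonneg (gradNorm_nonneg ..) (gradNorm_nonneg ..))
  rw [mul_pow, gradNorm_sq, gradNorm_sq, Q0]
  nlinarith [sq_nonneg (dT φ t x1 x2 * d1 ψ t x1 x2 + d1 φ t x1 x2 * dT ψ t x1 x2),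
    sq_nonneg (dT φ t x1 x2 * d2 ψ t x1 x2 + d2 φ t x1 x2 * dT ψ t x1 x2),
    sq_nonneg (d1 φ t x1 x2 * d2 ψ t x1 x2 - d2 φ t x1 x2 * d1 ψ t x1 x2)]

lemma abs_radial_le_rr_mul_gradNorm :
    |x1 * d1 φ t x1 x2 + x2 * d2 φ t x1 x2| ≤ rr x1 x2 * gradNorm φ t x1 x2 := by
  refine abs_le_of_sq_le_sq ?_ (mul_nonneg (rr_nonneg ..) (gradNorm_nonneg ..))
  rw [mul_pow, rr_sq, gradNorm_sq]
  nlinarith [sq_nonneg (x1 * d2 φ t x1 x2 - x2 * d1 φ t x1 x2),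
    sq_nonneg (x1 * dT φ t x1 x2), sq_nonneg (x2 * dT φ t x1 x2)]

lemma abs_Omg_le_rr_mul_gradNorm : |Omg φ t x1 x2| ≤ rr x1 x2 * gradNorm φ t x1 x2 := by
  refine abs_le_of_sq_le_sq ?_ (mul_nonneg (rr_nonneg ..) (gradNorm_nonneg ..))
  rw [mul_pow, rr_sq, gradNorm_sq, Omg]
  nlinarith [sq_nonneg (x1 * d1 φ t x1 x2 + x2 * d2 φ t x1 x2),
    sq_nonneg (x1 * dT φ t x1 x2), sq_nonneg (x2 * dT φ t x1 x2)]

lemma norm1_nonneg : 0 ≤ norm1 φ t x1 x2 := by unfold norm1; positivity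

lemma gradNorm_le_bracket1 : gradNorm φ t x1 x2 ≤ bracket1 φ t x1 x2 := by
  have := mul_le_mul_of_nonneg_right (one_le_jb (t - rr x1 x2)) (gradNorm_nonneg φ t x1 x2)
  rw [bracket1]
  linarith [norm1_nonneg φ t x1 x2]

lemma bracket1_nonneg : 0 ≤ bracket1 φ t x1 x2 :=
  (gradNorm_nonneg φ t x1 x2).trans (gradNorm_le_bracket1 φ t x1 x2)

lemma abs_L1_add_abs_L2_add_le_bracket1 :
    |L1 φ t x1 x2| + |L2 φ t x1 x2| + |t - rr x1 x2| * gradNorm φ t x1 x2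
      ≤ bracket1 φ t x1 x2 := by
  have := mul_le_mul_of_nonneg_right (abs_le_jb (t - rr x1 x2)) (gradNorm_nonneg φ t x1 x2)
  rw [bracket1, norm1]
  linarith [abs_nonneg (φ t x1 x2), abs_nonneg (Omg φ t x1 x2), abs_nonneg (dT φ t x1 x2),
    abs_nonneg (d1 φ t x1 x2), abs_nonneg (d2 φ t x1 x2)]

lemma abs_Omg_le_bracket1 : |Omg φ t x1 x2| ≤ bracket1 φ t x1 x2 := by
  have := mul_nonneg (zero_le_one.trans (one_le_jb (t - rr x1 x2))) (gradNorm_nonneg φ t x1 x2)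
  rw [bracket1, norm1]
  linarith [abs_nonneg (φ t x1 x2), abs_nonneg (L1 φ t x1 x2), abs_nonneg (L2 φ t x1 x2),
    abs_nonneg (dT φ t x1 x2), abs_nonneg (d1 φ t x1 x2), abs_nonneg (d2 φ t x1 x2)]

lemma sq_mul_Q0_eq : t ^ 2 * Q0 φ ψ t x1 x2
    = (t ^ 2 - rr x1 x2 ^ 2) * (dT φ t x1 x2 * dT ψ t x1 x2)
      + dT φ t x1 x2 * (x1 * L1 ψ t x1 x2 + x2 * L2 ψ t x1 x2)
      - t * (d1 ψ t x1 x2 * L1 φ t x1 x2 + d2 ψ t x1 x2 * L2 φ t x1 x2) := by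
  simp only [Q0, L1, L2]
  linear_combination dT φ t x1 x2 * dT ψ t x1 x2 * rr_sq x1 x2

lemma rr_mul_radial_eq : rr x1 x2 * (rr x1 x2 * dT φ t x1 x2 + (x1 * d1 φ t x1 x2 + x2 * d2 φ t x1 x2))
    = x1 * L1 φ t x1 x2 + x2 * L2 φ t x1 x2
      + (rr x1 x2 - t) * (x1 * d1 φ t x1 x2 + x2 * d2 φ t x1 x2) := by
  simp only [L1, L2]
  linear_combination dT φ t x1 x2 * rr_sq x1 x2

lemma two_mul_rr_sq_mul_Q0_eq : 2 * (rr x1 x2 ^ 2 * Q0 φ ψ t x1 x2)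
    = (rr x1 x2 * dT φ t x1 x2 + (x1 * d1 φ t x1 x2 + x2 * d2 φ t x1 x2))
        * (rr x1 x2 * dT ψ t x1 x2 - (x1 * d1 ψ t x1 x2 + x2 * d2 ψ t x1 x2))
      + (rr x1 x2 * dT φ t x1 x2 - (x1 * d1 φ t x1 x2 + x2 * d2 φ t x1 x2))
        * (rr x1 x2 * dT ψ t x1 x2 + (x1 * d1 ψ t x1 x2 + x2 * d2 ψ t x1 x2))
      - 2 * (Omg φ t x1 x2 * Omg ψ t x1 x2) := by
  simp only [Q0, Omg]
  linear_combination
    (-2 * (d1 φ t x1 x2 * d1 ψ t x1 x2 + d2 φ t x1 x2 * d2 ψ t x1 x2)) * rr_sq x1 x2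

lemma abs_rr_mul_dT_add_radial_le_bracket1 :
    |rr x1 x2 * dT φ t x1 x2 + (x1 * d1 φ t x1 x2 + x2 * d2 φ t x1 x2)| ≤ bracket1 φ t x1 x2 := by
  rcases (rr_nonneg x1 x2).eq_or_lt with hr | hr
  · have hx1 : x1 = 0 := abs_nonpos_iff.mp (hr ▸ abs_left_le_rr x1 x2)
    have hx2 : x2 = 0 := abs_nonpos_iff.mp (hr ▸ abs_right_le_rr x1 x2)
    have h0 : rr x1 x2 * dT φ t x1 x2 + (x1 * d1 φ t x1 x2 + x2 * d2 φ t x1 x2) = 0 := by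
      rw [← hr, hx1, hx2]; ring
    rw [h0, abs_zero]
    exact bracket1_nonneg φ t x1 x2
  have hL := abs_mul_add_mul_le (L1 φ t x1 x2) (L2 φ t x1 x2) (abs_left_le_rr x1 x2)
    (abs_right_le_rr x1 x2)
  have hX : |(rr x1 x2 - t) * (x1 * d1 φ t x1 x2 + x2 * d2 φ t x1 x2)|
      ≤ rr x1 x2 * (|t - rr x1 x2| * gradNorm φ t x1 x2) := by
    rw [abs_mul, abs_sub_comm, mul_left_comm]
    exact mul_le_mul_of_nonneg_left (abs_radial_le_rr_mul_gradNorm φ t x1 x2) (abs_nonneg _)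
  have hB := mul_le_mul_of_nonneg_left (abs_L1_add_abs_L2_add_le_bracket1 φ t x1 x2) hr.le
  refine le_of_mul_le_mul_left ?_ hr
  calc _ = |rr x1 x2 * (rr x1 x2 * dT φ t x1 x2 + (x1 * d1 φ t x1 x2 + x2 * d2 φ t x1 x2))| := by
        rw [abs_mul, abs_of_pos hr]
    _ ≤ rr x1 x2 * bracket1 φ t x1 x2 := by
        rw [rr_mul_radial_eq]
        linarith [abs_add_le (x1 * L1 φ t x1 x2 + x2 * L2 φ t x1 x2)
          ((rr x1 x2 - t) * (x1 * d1 φ t x1 x2 + x2 * d2 φ t x1 x2))]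

lemma abs_rr_mul_dT_sub_radial_le :
    |rr x1 x2 * dT φ t x1 x2 - (x1 * d1 φ t x1 x2 + x2 * d2 φ t x1 x2)|
      ≤ 2 * rr x1 x2 * gradNorm φ t x1 x2 := by
  have hT : |rr x1 x2 * dT φ t x1 x2| ≤ rr x1 x2 * gradNorm φ t x1 x2 := by
    rw [abs_mul, abs_of_nonneg (rr_nonneg x1 x2)]
    exact mul_le_mul_of_nonneg_left (abs_dT_le_gradNorm φ t x1 x2) (rr_nonneg x1 x2)
  linarith [abs_sub (rr x1 x2 * dT φ t x1 x2) (x1 * d1 φ t x1 x2 + x2 * d2 φ t x1 x2),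
    abs_radial_le_rr_mul_gradNorm φ t x1 x2]

lemma abs_sq_sub_rr_sq_mul_dT_mul_dT_le (ht : 0 ≤ t) :
    |(t ^ 2 - rr x1 x2 ^ 2) * (dT φ t x1 x2 * dT ψ t x1 x2)|
      ≤ (t + rr x1 x2) * (bracket1 φ t x1 x2 * gradNorm ψ t x1 x2) := by
  have hr := rr_nonneg x1 x2
  have hB := abs_L1_add_abs_L2_add_le_bracket1 φ t x1 x2
  have hGB : |t - rr x1 x2| * gradNorm φ t x1 x2 ≤ bracket1 φ t x1 x2 := by
    linarith [abs_nonneg (L1 φ t x1 x2), abs_nonneg (L2 φ t x1 x2)]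
  calc _ = (t + rr x1 x2) * (|t - rr x1 x2| * (|dT φ t x1 x2| * |dT ψ t x1 x2|)) := by
        rw [sq_sub_sq, abs_mul, abs_mul, abs_mul, abs_of_nonneg (by positivity : 0 ≤ t + rr x1 x2)]
        ring
    _ ≤ (t + rr x1 x2) * (|t - rr x1 x2| * (gradNorm φ t x1 x2 * gradNorm ψ t x1 x2)) := by
        gcongr
        · exact (abs_nonneg _).trans (abs_dT_le_gradNorm φ t x1 x2)
        all_goals apply abs_dT_le_gradNorm
    _ ≤ (t + rr x1 x2) * (bracket1 φ t x1 x2 * gradNorm ψ t x1 x2) := by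
        refine mul_le_mul_of_nonneg_left ?_ (by positivity)
        rw [← mul_assoc]
        exact mul_le_mul_of_nonneg_right hGB (gradNorm_nonneg ψ t x1 x2)

lemma sq_mul_abs_Q0_le (ht : 0 ≤ t) :
    t ^ 2 * |Q0 φ ψ t x1 x2| ≤ 2 * (t + rr x1 x2) *
      (bracket1 φ t x1 x2 * gradNorm ψ t x1 x2 + gradNorm φ t x1 x2 * bracket1 ψ t x1 x2) := by
  rw [← abs_of_nonneg (sq_nonneg t), ← abs_mul, sq_mul_Q0_eq]
  have hr := rr_nonneg x1 x2
  have hG := gradNorm_nonneg φ t x1 x2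
  have hG' := gradNorm_nonneg ψ t x1 x2
  have hB := abs_L1_add_abs_L2_add_le_bracket1 φ t x1 x2
  have hB' := abs_L1_add_abs_L2_add_le_bracket1 ψ t x1 x2
  have hdT := abs_dT_le_gradNorm φ t x1 x2
  have h1 := abs_sq_sub_rr_sq_mul_dT_mul_dT_le φ ψ t x1 x2 ht
  set r := rr x1 x2
  set G := gradNorm φ t x1 x2
  set G' := gradNorm ψ t x1 x2
  set B := bracket1 φ t x1 x2
  set B' := bracket1 ψ t x1 x2
  have h2 : |dT φ t x1 x2 * (x1 * L1 ψ t x1 x2 + x2 * L2 ψ t x1 x2)| ≤ (t + r) * (G * B') := by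
    rw [abs_mul, mul_left_comm]
    gcongr
    calc _ ≤ r * (|L1 ψ t x1 x2| + |L2 ψ t x1 x2|) :=
          abs_mul_add_mul_le _ _ (abs_left_le_rr x1 x2) (abs_right_le_rr x1 x2)
      _ ≤ (t + r) * B' := by gcongr <;> nlinarith [abs_nonneg (t - r)]
  have h3 : |t * (d1 ψ t x1 x2 * L1 φ t x1 x2 + d2 ψ t x1 x2 * L2 φ t x1 x2)|
      ≤ (t + r) * (B * G') := by
    rw [abs_mul, abs_of_nonneg ht, mul_comm B]
    gcongr
    · linarith
    calc _ ≤ G' * (|L1 φ t x1 x2| + |L2 φ t x1 x2|) :=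
          abs_mul_add_mul_le _ _ (abs_d1_le_gradNorm ψ t x1 x2) (abs_d2_le_gradNorm ψ t x1 x2)
      _ ≤ G' * B := by gcongr; nlinarith [abs_nonneg (t - r)]
  have hBG : 0 ≤ (t + r) * (G * B') :=
    mul_nonneg (by positivity) (mul_nonneg hG (bracket1_nonneg ψ t x1 x2))
  linarith [abs_sub ((t ^ 2 - r ^ 2) * (dT φ t x1 x2 * dT ψ t x1 x2)
      + dT φ t x1 x2 * (x1 * L1 ψ t x1 x2 + x2 * L2 ψ t x1 x2))
    (t * (d1 ψ t x1 x2 * L1 φ t x1 x2 + d2 ψ t x1 x2 * L2 φ t x1 x2)),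
    abs_add_le ((t ^ 2 - r ^ 2) * (dT φ t x1 x2 * dT ψ t x1 x2))
      (dT φ t x1 x2 * (x1 * L1 ψ t x1 x2 + x2 * L2 ψ t x1 x2))]

lemma rr_mul_abs_Q0_le :
    rr x1 x2 * |Q0 φ ψ t x1 x2| ≤ 2 *
      (bracket1 φ t x1 x2 * gradNorm ψ t x1 x2 + gradNorm φ t x1 x2 * bracket1 ψ t x1 x2) := by
  have hG := gradNorm_nonneg φ t x1 x2
  have hG' := gradNorm_nonneg ψ t x1 x2
  have hB := bracket1_nonneg φ t x1 x2
  have hB' := bracket1_nonneg ψ t x1 x2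
  rcases (rr_nonneg x1 x2).eq_or_lt with hr | hr
  · rw [← hr, zero_mul]
    positivity
  have hP1 := mul_le_mul (abs_rr_mul_dT_add_radial_le_bracket1 φ t x1 x2)
    (abs_rr_mul_dT_sub_radial_le ψ t x1 x2) (abs_nonneg _) hB
  have hP2 := mul_le_mul (abs_rr_mul_dT_sub_radial_le φ t x1 x2)
    (abs_rr_mul_dT_add_radial_le_bracket1 ψ t x1 x2) (abs_nonneg _) (by positivity)
  have hΩ := mul_le_mul (abs_Omg_le_rr_mul_gradNorm φ t x1 x2) (abs_Omg_le_bracket1 ψ t x1 x2)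
    (abs_nonneg _) (by positivity)
  have h : 2 * rr x1 x2 * (rr x1 x2 * |Q0 φ ψ t x1 x2|) ≤ 2 * rr x1 x2 *
      (bracket1 φ t x1 x2 * gradNorm ψ t x1 x2 + 2 * (gradNorm φ t x1 x2 * bracket1 ψ t x1 x2)) := by
    calc _ = |2 * (rr x1 x2 ^ 2 * Q0 φ ψ t x1 x2)| := by
          rw [abs_mul, abs_mul, abs_two, abs_of_pos (pow_pos hr 2)]; ring
      _ ≤ _ := by
          rw [two_mul_rr_sq_mul_Q0_eq]
          refine (abs_sub (G := ℝ) _ _).trans ((add_le_add (abs_add_le _ _) le_rfl).trans ?_)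
          simp only [abs_mul, abs_two]
          linarith
  have hS := le_of_mul_le_mul_left h (by positivity)
  linarith [mul_nonneg hB hG', mul_nonneg hG hB']

lemma add_rr_mul_abs_Q0_le (ht : 0 ≤ t) :
    (t + rr x1 x2) * |Q0 φ ψ t x1 x2| ≤ 8 *
      (bracket1 φ t x1 x2 * gradNorm ψ t x1 x2 + gradNorm φ t x1 x2 * bracket1 ψ t x1 x2) := by
  have hS : 0 ≤ bracket1 φ t x1 x2 * gradNorm ψ t x1 x2 + gradNorm φ t x1 x2 * bracket1 ψ t x1 x2 :=
    add_nonneg (mul_nonneg (bracket1_nonneg ..) (gradNorm_nonneg ..))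
      (mul_nonneg (gradNorm_nonneg ..) (bracket1_nonneg ..))
  have hQ := abs_nonneg (Q0 φ ψ t x1 x2)
  rcases le_total (rr x1 x2) t with hrt | htr
  · have htQ : t * |Q0 φ ψ t x1 x2| ≤ 4 *
        (bracket1 φ t x1 x2 * gradNorm ψ t x1 x2 + gradNorm φ t x1 x2 * bracket1 ψ t x1 x2) := by
      rcases ht.eq_or_lt with h0 | htpos
      · subst h0; rw [zero_mul]; linarith
      refine le_of_mul_le_mul_left ?_ htpos
      nlinarith [sq_mul_abs_Q0_le φ ψ t x1 x2 ht]
    nlinarith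
  · nlinarith [rr_mul_abs_Q0_le φ ψ t x1 x2]

lemma jb_add_rr_mul_abs_Q0_le (ht : 0 ≤ t) :
    jb (t + rr x1 x2) * |Q0 φ ψ t x1 x2| ≤ 9 *
      (bracket1 φ t x1 x2 * gradNorm ψ t x1 x2 + gradNorm φ t x1 x2 * bracket1 ψ t x1 x2) := by
  have hQ := (abs_Q0_le_gradNorm_mul φ ψ t x1 x2).trans
    (mul_le_mul_of_nonneg_right (gradNorm_le_bracket1 φ t x1 x2) (gradNorm_nonneg ψ t x1 x2))
  have hJ := jb_le_one_add_abs (t + rr x1 x2)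
  rw [abs_of_nonneg (add_nonneg ht (rr_nonneg x1 x2))] at hJ
  nlinarith [add_rr_mul_abs_Q0_le φ ψ t x1 x2 ht, abs_nonneg (Q0 φ ψ t x1 x2),
    mul_nonneg (gradNorm_nonneg φ t x1 x2) (bracket1_nonneg ψ t x1 x2)]

end Pointwise

/-- Null form estimate: |Q₀(φ,ψ)| ≤ C⟨t+|x|⟩^{-1}([φ]₁|∂ψ| + |∂φ|[ψ]₁). -/
theorem null_form_estimate :
    ∃ C > 0, ∀ φ ψ : ℝ → ℝ → ℝ → ℝ,
      ContDiffOn ℝ (⊤ : ℕ∞) (fun p : ℝ × ℝ × ℝ => φ p.1 p.2.1 p.2.2) {p : ℝ × ℝ × ℝ | 0 < p.1} →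
      ContDiffOn ℝ (⊤ : ℕ∞) (fun p : ℝ × ℝ × ℝ => ψ p.1 p.2.1 p.2.2) {p : ℝ × ℝ × ℝ | 0 < p.1} →
      ∀ t x1 x2 : ℝ, 0 < t →
        |Q0 φ ψ t x1 x2| ≤ C * (jb (t + rr x1 x2))⁻¹ *
          (bracket1 φ t x1 x2 * gradNorm ψ t x1 x2 + gradNorm φ t x1 x2 * bracket1 ψ t x1 x2) := by
  refine ⟨9, by norm_num, fun φ ψ _ _ t x1 x2 ht => ?_⟩
  have hJ : 0 < jb (t + rr x1 x2) := zero_lt_one.trans_le (one_le_jb _)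
  rw [mul_comm 9, mul_assoc, ← div_eq_inv_mul, le_div_iff₀ hJ, mul_comm]
  exact jb_add_rr_mul_abs_Q0_le φ ψ t x1 x2 ht.le
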